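/- arXiv:1005.2640 — 4 statements merged into one kernel-verified Lean document; each statement's English description precedes it below -/
import Mathlib

section
/- Let J be a compact subset of a metric space that is uniformly perfect with constants η̂ > 1 and r̂ > 0 (i.e., for each x ∈ J and each r ∈ (0, r̂) the annulus B(x, η̂ r) \ B(x, r) intersects J), and let ρ be a doubling measure supported on J with doubling constants C* and r*. Then there exist η₀ > 1, ε₀ ∈ (0,1) and r₀ > 0 such that for every r ∈ (0, r₀) and every x ∈ J, ρ(B(x, η₀ r) \ B(x, r)) ≥ ε₀ ρ(B(x, r)). -/
/-!
Uniform perfectness at scale `2r` yields a point `y ∈ J` with `2r ≤ d(x, y) < 2η̂r`. Then the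
ball `B(y, r)` lies in the annulus `B(x, (2η̂ + 1)r) \ B(x, r)`, while `B(x, r) ⊆ B(y, 2ᵏ r)` once
`2η̂ + 1 ≤ 2ᵏ`. Doubling `k` times at `y` gives `ρ(B(x, r)) ≤ C*ᵏ ρ(B(y, r))`, which bounds the
measure of the ball by `C*ᵏ` times that of the annulus.
-/

open MeasureTheory Metric ENNReal

theorem ball_subset_ball_sdiff_ball {X : Type*} [PseudoMetricSpace X] {x y : X} {r R : ℝ}
    (h₁ : 2 * r ≤ dist x y) (h₂ : dist x y + r ≤ R) : ball y r ⊆ ball x R \ ball x r := by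
  intro z hz
  rw [mem_ball] at hz
  refine ⟨?_, ?_⟩
  · rw [mem_ball]
    linarith [dist_triangle z y x, dist_comm x y]
  · rw [mem_ball, not_lt]
    linarith [dist_triangle x z y, dist_comm x z]

section Doubling

variable {X : Type*} [PseudoMetricSpace X] [MeasurableSpace X] {J : Set X} {ρ : Measure X}
  {C : ℝ≥0∞} {rs : ℝ}

theorem measure_ball_two_pow_mul_le
    (hdoub : ∀ x ∈ J, ∀ r : ℝ, 0 < r → r < rs → ρ (ball x (2 * r)) ≤ C * ρ (ball x r))
    {x : X} (hx : x ∈ J) {r : ℝ} (hr : 0 < r) :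
    ∀ n : ℕ, 2 ^ n * r < 2 * rs → ρ (ball x (2 ^ n * r)) ≤ C ^ n * ρ (ball x r)
  | 0, _ => by simp
  | n + 1, h => by
    have hpos : 0 < 2 ^ n * r := by positivity
    have hn : 2 ^ n * r < rs := by rw [pow_succ] at h; linarith
    calc ρ (ball x (2 ^ (n + 1) * r)) = ρ (ball x (2 * (2 ^ n * r))) := by ring_nf
      _ ≤ C * ρ (ball x (2 ^ n * r)) := hdoub x hx _ hpos hn
      _ ≤ C * (C ^ n * ρ (ball x r)) := by
        gcongr
        exact measure_ball_two_pow_mul_le hdoub hx hr n (by linarith)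
      _ = C ^ (n + 1) * ρ (ball x r) := by ring

theorem measure_ball_le_pow_mul_measure_annulus
    (hdoub : ∀ x ∈ J, ∀ r : ℝ, 0 < r → r < rs → ρ (ball x (2 * r)) ≤ C * ρ (ball x r))
    {η rH : ℝ}
    (hup : ∀ x ∈ J, ∀ r : ℝ, 0 < r → r < rH → ((ball x (η * r) \ ball x r) ∩ J).Nonempty)
    {k : ℕ} (hk : 2 * η + 1 ≤ 2 ^ k) {x : X} (hx : x ∈ J) {r : ℝ} (hr : 0 < r)
    (hrH : 2 * r < rH) (hrs : 2 ^ k * r < 2 * rs) :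
    ρ (ball x r) ≤ C ^ k * ρ (ball x ((2 * η + 1) * r) \ ball x r) := by
  obtain ⟨y, ⟨hy_lt, hy_ge⟩, hyJ⟩ := hup x hx (2 * r) (by positivity) hrH
  rw [mem_ball, dist_comm] at hy_lt
  rw [mem_ball, dist_comm, not_lt] at hy_ge
  calc ρ (ball x r) ≤ ρ (ball y (2 ^ k * r)) :=
        measure_mono (ball_subset_ball' (by nlinarith [mul_le_mul_of_nonneg_right hk hr.le]))
    _ ≤ C ^ k * ρ (ball y r) := measure_ball_two_pow_mul_le hdoub hyJ hr k hrs
    _ ≤ C ^ k * ρ (ball x ((2 * η + 1) * r) \ ball x r) :=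
        mul_le_mul_right (measure_mono (ball_subset_ball_sdiff_ball hy_ge (by linarith))) _

end Doubling

theorem ENNReal.ofReal_one_div_one_add_mul_le {M : ℝ} (hM : 0 ≤ M) {a b : ℝ≥0∞}
    (h : a ≤ ENNReal.ofReal M * b) : ENNReal.ofReal (1 / (1 + M)) * a ≤ b :=
  calc ENNReal.ofReal (1 / (1 + M)) * a
        ≤ ENNReal.ofReal (1 / (1 + M)) * (ENNReal.ofReal M * b) := by gcongr
    _ = ENNReal.ofReal (M / (1 + M)) * b := by
        rw [← mul_assoc, ← ENNReal.ofReal_mul (by positivity), one_div_mul_eq_div]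
    _ ≤ 1 * b := by
        gcongr
        exact ENNReal.ofReal_le_one.mpr ((div_le_one (by positivity)).mpr (by linarith))
    _ = b := one_mul b

theorem stmt1_general {X : Type*} [MetricSpace X] [MeasurableSpace X]
    (J : Set X)
    (ρ : Measure X)
    (Cs rs : ℝ) (hCs : 0 < Cs) (hrs : 0 < rs)
    (hdoub : ∀ x ∈ J, ∀ r : ℝ, 0 < r → r < rs →
      ρ (ball x (2 * r)) ≤ ENNReal.ofReal Cs * ρ (ball x r))
    (etaH rH : ℝ) (hetaH : 1 < etaH) (hrH : 0 < rH)
    (hup : ∀ x ∈ J, ∀ r : ℝ, 0 < r → r < rH →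
      ((ball x (etaH * r) \ ball x r) ∩ J).Nonempty) :
    ∃ η₀ > (1 : ℝ), ∃ ε₀ : ℝ, 0 < ε₀ ∧ ε₀ < 1 ∧ ∃ r₀ > (0 : ℝ),
      ∀ r : ℝ, 0 < r → r < r₀ → ∀ x ∈ J,
        ENNReal.ofReal ε₀ * ρ (ball x r) ≤ ρ (ball x (η₀ * r) \ ball x r) := by
  obtain ⟨k, hk⟩ : ∃ k : ℕ, 2 * etaH + 1 < 2 ^ k :=
    pow_unbounded_of_one_lt _ one_lt_two
  have hCk : 0 < Cs ^ k := pow_pos hCs k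
  refine ⟨2 * etaH + 1, by linarith, 1 / (1 + Cs ^ k), by positivity,
    (div_lt_one (by positivity)).mpr (by linarith), min (rs / 2 ^ k) (rH / 2),
    lt_min (by positivity) (by positivity), fun r hr hr₀ x hx => ?_⟩
  have hrs' : 2 ^ k * r < 2 * rs := by
    have := (lt_div_iff₀' (by positivity)).mp (hr₀.trans_le (min_le_left _ _))
    linarith
  have hrH' : 2 * r < rH := by linarith [hr₀.trans_le (min_le_right _ _)]
  refine ENNReal.ofReal_one_div_one_add_mul_le hCk.le ?_
  rw [ENNReal.ofReal_pow hCs.le]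
  exact measure_ball_le_pow_mul_measure_annulus hdoub hup hk.le hx hr hrH' hrs'

/-- For a doubling measure supported on a uniformly perfect compact set `J`,
annuli carry a definite proportion of the measure of the inner ball. -/
theorem stmt1 {X : Type*} [MetricSpace X] [MeasurableSpace X] [BorelSpace X]
    (J : Set X) (hJ : IsCompact J)
    (ρ : Measure X) (hsupp : ρ Jᶜ = 0)
    (Cs rs : ℝ) (hCs : 0 < Cs) (hrs : 0 < rs)
    (hdoub : ∀ x ∈ J, ∀ r : ℝ, 0 < r → r < rs →
      ρ (ball x (2 * r)) ≤ ENNReal.ofReal Cs * ρ (ball x r))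
    (etaH rH : ℝ) (hetaH : 1 < etaH) (hrH : 0 < rH)
    (hup : ∀ x ∈ J, ∀ r : ℝ, 0 < r → r < rH →
      ((ball x (etaH * r) \ ball x r) ∩ J).Nonempty) :
    ∃ η₀ > (1 : ℝ), ∃ ε₀ : ℝ, 0 < ε₀ ∧ ε₀ < 1 ∧ ∃ r₀ > (0 : ℝ),
      ∀ r : ℝ, 0 < r → r < r₀ → ∀ x ∈ J,
        ENNReal.ofReal ε₀ * ρ (ball x r) ≤ ρ (ball x (η₀ * r) \ ball x r) :=
  stmt1_general J ρ Cs rs hCs hrs hdoub etaH rH hetaH hrH hup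
end

section
/- Let J be a uniformly perfect compact subset of a metric space and ρ a doubling measure supported on J. Then there exist η₁ > 1 and r₁ > 0 such that for every r ∈ (0, r₁) and every x ∈ J, ρ(B(x, η₁ r)) ≥ 2 ρ(B(x, r)). -/
/-!
Pick a point `y ∈ J` with `2r ≤ d(x, y) < 2ηr` (uniform perfectness). The balls `B(x, r)` and
`B(y, r)` are disjoint and both lie in `B(x, (2η + 1) r)`, while iterated doubling around `y`
bounds `ρ(B(x, r)) ≤ ρ(B(y, (2η + 1) r))` by `D ρ(B(y, r))` with `D` independent of `x`
and `r`. Hence inflating radii by `2η + 1` multiplies the measure of small balls by at least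
`1 + 1 / D`, and `k` such inflations, where `(1 + 1 / D) ^ k ≥ 2`, double it.
-/

open MeasureTheory Metric ENNReal NNReal

section Iteration

variable {f : ℝ → ℝ≥0∞}

lemma le_pow_mul_of_forall_two_mul_le {C : ℝ≥0∞} {R : ℝ}
    (h : ∀ r, 0 < r → r < R → f (2 * r) ≤ C * f r) :
    ∀ (n : ℕ) {r : ℝ}, 0 < r → 2 ^ n * r ≤ R → f (2 ^ n * r) ≤ C ^ n * f r
  | 0, r, _, _ => by simp
  | n + 1, r, hr, hR => by
    have hnR : 2 ^ n * r < R :=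
      lt_of_lt_of_le (by gcongr <;> norm_num) hR
    calc f (2 ^ (n + 1) * r) = f (2 * (2 ^ n * r)) := by ring_nf
      _ ≤ C * f (2 ^ n * r) := h _ (by positivity) hnR
      _ ≤ C * (C ^ n * f r) := by
        gcongr C * ?_; exact le_pow_mul_of_forall_two_mul_le h n hr hnR.le
      _ = C ^ (n + 1) * f r := by ring

lemma pow_mul_le_pow_mul_of_forall_mul_le {a b : ℝ≥0∞} {η T : ℝ} (hη : 1 ≤ η)
    (h : ∀ r, 0 < r → r ≤ T → a * f r ≤ b * f (η * r)) :
    ∀ (k : ℕ) {r : ℝ}, 0 < r → η ^ k * r ≤ T → a ^ k * f r ≤ b ^ k * f (η ^ k * r)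
  | 0, r, _, _ => by simp
  | k + 1, r, hr, hT => by
    have hkT : η ^ k * r ≤ T := by
      refine le_trans ?_ hT
      gcongr ?_ * r
      exact pow_le_pow_right₀ hη k.le_succ
    calc a ^ (k + 1) * f r = a * (a ^ k * f r) := by ring
      _ ≤ a * (b ^ k * f (η ^ k * r)) := by
        gcongr a * ?_; exact pow_mul_le_pow_mul_of_forall_mul_le hη h k hr hkT
      _ = b ^ k * (a * f (η ^ k * r)) := by ring
      _ ≤ b ^ k * (b * f (η * (η ^ k * r))) := by
        gcongr b ^ k * ?_; exact h _ (by positivity) hkT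
      _ = b ^ (k + 1) * f (η ^ (k + 1) * r) := by ring_nf

lemma exists_ne_zero_two_mul_pow_le_add_one_pow {D : ℝ≥0} (hD : 0 < D) :
    ∃ k ≠ 0, 2 * D ^ k ≤ (D + 1) ^ k := by
  obtain ⟨k, hk⟩ := pow_unbounded_of_one_lt (2 : ℝ≥0) (one_lt_div hD |>.2 (lt_add_one D))
  refine ⟨k, ?_, ?_⟩
  · rintro rfl
    norm_num at hk
  · rw [div_pow, lt_div_iff₀ (pow_pos hD k)] at hk
    exact hk.le

lemma two_mul_le_of_forall_add_one_mul_le {D : ℝ≥0} (hD : 0 < D) {η T : ℝ} (hη : 1 ≤ η)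
    (h : ∀ r, 0 < r → r ≤ T → (D + 1) * f r ≤ D * f (η * r))
    {k : ℕ} (hk : 2 * D ^ k ≤ (D + 1) ^ k) {r : ℝ} (hr : 0 < r) (hT : η ^ k * r ≤ T) :
    2 * f r ≤ f (η ^ k * r) := by
  have hDk : ((D : ℝ≥0∞) ^ k) ≠ 0 := pow_ne_zero _ (by exact_mod_cast hD.ne')
  refine (ENNReal.mul_le_mul_iff_right hDk (pow_ne_top coe_ne_top)).1 ?_
  calc (D : ℝ≥0∞) ^ k * (2 * f r) = ((2 * D ^ k : ℝ≥0) : ℝ≥0∞) * f r := by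
        push_cast; ring
    _ ≤ (((D + 1) ^ k : ℝ≥0) : ℝ≥0∞) * f r := by gcongr
    _ = ((D : ℝ≥0∞) + 1) ^ k * f r := by push_cast; rfl
    _ ≤ (D : ℝ≥0∞) ^ k * f (η ^ k * r) := pow_mul_le_pow_mul_of_forall_mul_le hη h k hr hT

end Iteration

lemma add_one_mul_measure_le_of_disjoint {Ω : Type*} [MeasurableSpace Ω] {μ : Measure Ω}
    {A B S : Set Ω} {D : ℝ≥0∞} (hB : MeasurableSet B) (hAB : Disjoint A B) (hAS : A ⊆ S)
    (hBS : B ⊆ S) (h : μ A ≤ D * μ B) : (D + 1) * μ A ≤ D * μ S :=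
  calc (D + 1) * μ A = D * μ A + μ A := by ring
    _ ≤ D * μ A + D * μ B := by gcongr
    _ = D * μ (A ∪ B) := by rw [measure_union hAB hB, mul_add]
    _ ≤ D * μ S := by gcongr; exact Set.union_subset hAS hBS

lemma add_one_mul_measure_ball_le_of_mem_annulus {X : Type*} [MetricSpace X] [MeasurableSpace X]
    [OpensMeasurableSpace X] {μ : Measure X} {x y : X} {η r : ℝ} {D : ℝ≥0∞}
    (hy : y ∈ ball x (η * (2 * r)) \ ball x (2 * r))
    (hD : μ (ball y ((2 * η + 1) * r)) ≤ D * μ (ball y r)) :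
    (D + 1) * μ (ball x r) ≤ D * μ (ball x ((2 * η + 1) * r)) := by
  obtain ⟨hy_lt, hy_ge⟩ := hy
  rw [mem_ball] at hy_lt
  rw [mem_ball, not_lt] at hy_ge
  have hxy := dist_comm x y
  refine add_one_mul_measure_le_of_disjoint (B := ball y r) measurableSet_ball ?_
    (ball_subset_ball (by nlinarith [dist_nonneg (x := x) (y := y)])) ?_ ?_
  · refine Set.disjoint_left.2 fun z hzx hzy => ?_
    rw [mem_ball] at hzx hzy
    linarith [dist_triangle_left y x z]
  · refine fun z hz => mem_ball.2 ?_
    rw [mem_ball] at hz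
    linarith [dist_triangle z y x]
  · refine (measure_mono fun z hz => mem_ball.2 ?_).trans hD
    rw [mem_ball] at hz
    linarith [dist_triangle z x y]

theorem stmt2_general {X : Type*} [MetricSpace X] [MeasurableSpace X] [BorelSpace X]
    (J : Set X)
    (ρ : Measure X)
    (Cs rs : ℝ) (hrs : 0 < rs)
    (hdoub : ∀ x ∈ J, ∀ r : ℝ, 0 < r → r < rs →
      ρ (ball x (2 * r)) ≤ ENNReal.ofReal Cs * ρ (ball x r))
    (etaH rH : ℝ) (hetaH : 1 < etaH) (hrH : 0 < rH)
    (hup : ∀ x ∈ J, ∀ r : ℝ, 0 < r → r < rH →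
      ((ball x (etaH * r) \ ball x r) ∩ J).Nonempty) :
    ∃ η₁ > (1 : ℝ), ∃ r₁ > (0 : ℝ), ∀ r : ℝ, 0 < r → r < r₁ → ∀ x ∈ J,
      2 * ρ (ball x r) ≤ ρ (ball x (η₁ * r)) := by
  set C : ℝ≥0 := max Cs.toNNReal 1
  have hdoubC : ∀ x ∈ J, ∀ r : ℝ, 0 < r → r < rs →
      ρ (ball x (2 * r)) ≤ C * ρ (ball x r) :=
    fun x hx r hr hr' => (hdoub x hx r hr hr').trans <| by
      gcongr; exact coe_le_coe.2 (le_max_left Cs.toNNReal 1)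
  obtain ⟨m, hm⟩ := pow_unbounded_of_one_lt (2 * etaH + 1) (one_lt_two : (1 : ℝ) < 2)
  set D : ℝ≥0 := C ^ m
  have hD : 0 < D := pow_pos (zero_lt_one.trans_le (le_max_right Cs.toNNReal 1)) m
  set T := min (rH / 4) (rs / 2 ^ m)
  have hgain : ∀ x ∈ J, ∀ r, 0 < r → r ≤ T →
      (D + 1) * ρ (ball x r) ≤ D * ρ (ball x ((2 * etaH + 1) * r)) := by
    intro x hx r hr hrT
    obtain ⟨y, hy, hyJ⟩ := hup x hx (2 * r) (by positivity)
      (by linarith [hrT.trans (min_le_left _ _)])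
    have hr_rs : 2 ^ m * r ≤ rs :=
      (le_div_iff₀' (by positivity)).1 (hrT.trans (min_le_right _ _))
    refine add_one_mul_measure_ball_le_of_mem_annulus hy ?_
    calc ρ (ball y ((2 * etaH + 1) * r)) ≤ ρ (ball y (2 ^ m * r)) := by gcongr
      _ ≤ C ^ m * ρ (ball y r) := le_pow_mul_of_forall_two_mul_le (hdoubC y hyJ) m hr hr_rs
      _ = D * ρ (ball y r) := by push_cast [D]; rfl
  obtain ⟨k, hk0, hk⟩ := exists_ne_zero_two_mul_pow_le_add_one_pow hD
  have hη : 1 < 2 * etaH + 1 := by linarith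
  refine ⟨(2 * etaH + 1) ^ k, one_lt_pow₀ hη hk0, T / (2 * etaH + 1) ^ k, by positivity,
    fun r hr hr₁ x hx => ?_⟩
  exact two_mul_le_of_forall_add_one_mul_le hD hη.le (hgain x hx) hk hr
    ((lt_div_iff₀' (by positivity)).1 hr₁).le

/-- For a doubling measure supported on a uniformly perfect compact set `J`,
some fixed inflation of radii doubles the measure of balls. -/
theorem stmt2 {X : Type*} [MetricSpace X] [MeasurableSpace X] [BorelSpace X]
    (J : Set X) (hJ : IsCompact J)
    (ρ : Measure X) (hsupp : ρ Jᶜ = 0)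
    (Cs rs : ℝ) (hCs : 0 < Cs) (hrs : 0 < rs)
    (hdoub : ∀ x ∈ J, ∀ r : ℝ, 0 < r → r < rs →
      ρ (ball x (2 * r)) ≤ ENNReal.ofReal Cs * ρ (ball x r))
    (etaH rH : ℝ) (hetaH : 1 < etaH) (hrH : 0 < rH)
    (hup : ∀ x ∈ J, ∀ r : ℝ, 0 < r → r < rH →
      ((ball x (etaH * r) \ ball x r) ∩ J).Nonempty) :
    ∃ η₁ > (1 : ℝ), ∃ r₁ > (0 : ℝ), ∀ r : ℝ, 0 < r → r < r₁ → ∀ x ∈ J,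
      2 * ρ (ball x r) ≤ ρ (ball x (η₁ * r)) :=
  stmt2_general J ρ Cs rs hrs hdoub etaH rH hetaH hrH hup
end

section
/- Let f be a rational map of degree d ≥ 2 with maximal entropy measure ρ, and suppose there are constants r₀ > 0, α > 0, C > 0 such that ρ(B(x, r)) ≥ C r^α for all x ∈ J(f) and r ∈ (0, r₀). Then for every integer n ≥ 1 and every repelling periodic point p of period n, |(f^n)'(p)| ≥ d^{n/α}. In particular f is uniformly hyperbolic on periodic orbits with constant λ = d^{1/α}. -/
open MeasureTheory Metric ENNReal

/-- If the maximal entropy measure of a degree `d ≥ 2` map satisfies the lower bound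
`ρ(B(x,r)) ≥ C r^α` on the Julia set, then every repelling periodic point `p` of
period `n` has multiplier `|(f^n)'(p)| ≥ d^{n/α}`: uniform hyperbolicity on periodic
orbits with constant `λ = d^{1/α}`. The dynamical facts from the context (local
inverse branches and the Jacobian property of `ρ` along them) are taken as
hypotheses. -/
theorem stmt5 (f : ℂ → ℂ) (J : Set ℂ)
    (ρ : Measure ℂ) [IsProbabilityMeasure ρ]
    (d : ℕ) (hd : 2 ≤ d)
    (r₀ α C : ℝ) (hr₀ : 0 < r₀) (hα : 0 < α) (hC : 0 < C)
    (hlow : ∀ x ∈ J, ∀ r : ℝ, 0 < r → r < r₀ →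
      ENNReal.ofReal (C * r ^ α) ≤ ρ (ball x r))
    (hbranch : ∀ (n : ℕ) (p μ : ℂ), 1 ≤ n → p ∈ J → f^[n] p = p →
      HasDerivAt (f^[n]) μ p → 1 < ‖μ‖ →
      ∃ (φ : ℂ → ℂ) (r₁ C₁ : ℝ), 0 < r₁ ∧ 0 < C₁ ∧
        (∀ k : ℕ, 1 ≤ k →
          ρ (φ^[k] '' ball p r₁) = ρ (ball p r₁) / (d : ℝ≥0∞) ^ (k * n)) ∧
        (∀ k : ℕ, 1 ≤ k → ball p (C₁ * (‖μ‖⁻¹) ^ k) ⊆ φ^[k] '' ball p r₁)) :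
    ∀ (n : ℕ) (p μ : ℂ), 1 ≤ n → p ∈ J → f^[n] p = p →
      HasDerivAt (f^[n]) μ p → 1 < ‖μ‖ →
      (d : ℝ) ^ ((n : ℝ) / α) ≤ ‖μ‖ := by
  intro n p μ hn hp hfix hder hμ
  obtain ⟨φ, r₁, C₁, hr₁, hC₁, hjac, hsub⟩ := hbranch n p μ hn hp hfix hder hμ
  by_contra hcon
  push_neg at hcon
  set a := ‖μ‖ with ha
  have ha0 : (0:ℝ) < a := lt_trans one_pos hμ
  have hd0 : (0:ℝ) < (d:ℝ) := by positivity
  have haα : (0:ℝ) < a ^ α := Real.rpow_pos_of_pos ha0 α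
  have hdn : a ^ α < (d:ℝ) ^ n := by
    have h := Real.rpow_lt_rpow (le_of_lt ha0) hcon hα
    have h2 : ((d:ℝ) ^ ((n:ℝ)/α)) ^ α = (d:ℝ) ^ n := by
      rw [← Real.rpow_natCast ((d:ℝ)) n, ← Real.rpow_mul (le_of_lt hd0),
        div_mul_cancel₀ _ (ne_of_gt hα)]
    rwa [h2] at h
  have hq : 1 < (d:ℝ)^n / a^α := (one_lt_div haα).2 hdn
  have key : ∀ k : ℕ, 1 ≤ k → C₁ * a⁻¹ ^ k < r₀ →
      ((d:ℝ)^n / a^α)^k ≤ (C * C₁ ^ α)⁻¹ := by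
    intro k hk hsmall
    set r := C₁ * a⁻¹ ^ k with hr
    have hrpos : 0 < r := by positivity
    have h1 : ENNReal.ofReal (C * r ^ α) ≤ ρ (ball p r) := hlow p hp r hrpos hsmall
    have h2 : ρ (ball p r) ≤ ρ (φ^[k] '' ball p r₁) := measure_mono (hsub k hk)
    have h3 : ρ (φ^[k] '' ball p r₁) ≤ 1 / (d : ℝ≥0∞) ^ (k * n) := by
      rw [hjac k hk]
      gcongr
      exact prob_le_one
    have heq : (1 : ℝ≥0∞) / (d : ℝ≥0∞) ^ (k * n)
        = ENNReal.ofReal (((d:ℝ) ^ (k * n))⁻¹) := by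
      rw [ENNReal.ofReal_inv_of_pos (by positivity), one_div,
        ENNReal.ofReal_pow (le_of_lt hd0), ENNReal.ofReal_natCast]
    have h4 : C * r ^ α ≤ ((d:ℝ) ^ (k * n))⁻¹ := by
      have := (h1.trans (h2.trans h3)).trans_eq heq
      exact (ENNReal.ofReal_le_ofReal_iff (by positivity)).1 this
    have hrα : r ^ α = C₁ ^ α * ((a ^ α) ^ k)⁻¹ := by
      rw [hr, Real.mul_rpow (le_of_lt hC₁) (by positivity)]
      congr 1
      rw [inv_pow, ← Real.rpow_natCast a k, ← Real.rpow_natCast (a ^ α) k,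
        Real.inv_rpow (by positivity), ← Real.rpow_mul (le_of_lt ha0),
        ← Real.rpow_mul (le_of_lt ha0), mul_comm]
    have hX : (0:ℝ) < (a ^ α) ^ k := by positivity
    have hY : (0:ℝ) < ((d:ℝ) ^ n) ^ k := by positivity
    have hP : (0:ℝ) < C * C₁ ^ α := by positivity
    have hdk : (d:ℝ) ^ (k * n) = ((d:ℝ) ^ n) ^ k := by
      rw [← pow_mul, Nat.mul_comm]
    have h5 : (C * C₁ ^ α) * ((d:ℝ) ^ n) ^ k ≤ (a ^ α) ^ k := by
      have h6 : (C * C₁ ^ α) / (a ^ α) ^ k ≤ 1 / ((d:ℝ) ^ n) ^ k := by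
        rw [div_le_div_iff₀ hX hY] at *
        calc (C * C₁ ^ α) * ((d:ℝ) ^ n) ^ k
            = (C * (C₁ ^ α * ((a ^ α) ^ k)⁻¹)) * (((d:ℝ) ^ n) ^ k * (a ^ α) ^ k) := by
              field_simp
          _ ≤ (((d:ℝ) ^ (k*n))⁻¹) * (((d:ℝ) ^ n) ^ k * (a ^ α) ^ k) := by
              apply mul_le_mul_of_nonneg_right _ (by positivity)
              rw [← hrα]; exact h4
          _ = (a ^ α) ^ k * 1 := by
              rw [hdk, ← mul_assoc, inv_mul_cancel₀ (ne_of_gt hY), one_mul, mul_one]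
          _ = 1 * (a ^ α) ^ k := by ring
      have := (div_le_div_iff₀ hX hY).1 h6
      linarith
    rw [div_pow, div_le_iff₀ hX]
    calc ((d:ℝ) ^ n) ^ k = (C * C₁ ^ α)⁻¹ * ((C * C₁ ^ α) * ((d:ℝ) ^ n) ^ k) := by
          field_simp
      _ ≤ (C * C₁ ^ α)⁻¹ * (a ^ α) ^ k := by
          exact mul_le_mul_of_nonneg_left h5 (by positivity)
  have htend : Filter.Tendsto (fun k : ℕ => ((d:ℝ)^n / a^α)^k) Filter.atTop Filter.atTop :=
    tendsto_pow_atTop_atTop_of_one_lt hq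
  have hsmall : ∀ᶠ k : ℕ in Filter.atTop, C₁ * a⁻¹ ^ k < r₀ := by
    have h0 : Filter.Tendsto (fun k : ℕ => C₁ * a⁻¹ ^ k) Filter.atTop (nhds 0) := by
      have h1 : Filter.Tendsto (fun k : ℕ => a⁻¹ ^ k) Filter.atTop (nhds 0) :=
        tendsto_pow_atTop_nhds_zero_of_lt_one (by positivity) (inv_lt_one_of_one_lt₀ hμ)
      simpa using h1.const_mul C₁
    exact h0.eventually (gt_mem_nhds hr₀)
  have hgt := htend.eventually_gt_atTop (C * C₁ ^ α)⁻¹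
  obtain ⟨k, hk1, hk2, hk3⟩ := (hsmall.and (hgt.and (Filter.eventually_ge_atTop 1))).exists
  exact absurd (key k hk3 hk1) (not_le.2 hk2)
end

section
/- Every John domain D ⊂ ℝ² (or in a metric space) has porous boundary: if D is a John domain with center z₀ and constant C > 0, then there exists ξ ∈ (0, 1) such that for every sufficiently small r > 0 and every x ∈ ∂D there is y ∈ B(x, r) with B(y, ξ r) ∩ ∂D = ∅. -/
/-!
Follow the John curve from `x ∈ ∂D` back towards `z₀` until it is at distance `r / 2` from `x`;
this is possible as long as `r / 2 < dist(z₀, ∂D)`. At that point `y` the John condition gives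
`dist(y, ∂D) ≥ C r / 2`, so `B(y, ξ r)` misses `∂D` for `ξ = min (C / 2) (1 / 2)`.
-/

open Metric Set

section

variable {X : Type*} [MetricSpace X]

theorem Path.exists_dist_eq {a x : X} (γ : Path a x) {s : ℝ} (hs₀ : 0 ≤ s) (hs : s ≤ dist a x) :
    ∃ t, dist (γ t) x = s := by
  have hf : Continuous fun t => dist (γ t) x := γ.continuous.dist continuous_const
  simpa using intermediate_value_univ 1 0 hf ⟨by simpa using hs₀, by simpa using hs⟩

theorem exists_mem_ball_disjoint_ball_of_path {F : Set X} {a x : X} {C r : ℝ} (γ : Path a x)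
    (hγ : ∀ t, C * dist (γ t) x ≤ infDist (γ t) F) (hr : 0 < r) (hra : r ≤ 2 * dist a x) :
    ∃ y ∈ ball x r, Disjoint (ball y (C / 2 * r)) F := by
  obtain ⟨t, ht⟩ := γ.exists_dist_eq (s := r / 2) (by positivity) (by linarith)
  refine ⟨γ t, by rw [mem_ball, ht]; linarith, disjoint_ball_infDist.mono_left (ball_subset_ball ?_)⟩
  calc C / 2 * r = C * dist (γ t) x := by rw [ht]; ring
    _ ≤ infDist (γ t) F := hγ t

end

theorem stmt7_general (D : Set ℂ) (hD : IsOpen D)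
    (z₀ : ℂ) (hz₀ : z₀ ∈ D) (C : ℝ) (hC : 0 < C)
    (hJohn : ∀ z ∈ frontier D, ∃ γ : Path z₀ z,
      Set.range γ \ {z} ⊆ D ∧
      ∀ t : unitInterval, C * dist (γ t) z ≤ infDist (γ t) (frontier D)) :
    ∃ ξ : ℝ, 0 < ξ ∧ ξ < 1 ∧ ∃ r₀ > (0 : ℝ), ∀ r : ℝ, 0 < r → r < r₀ →
      ∀ x ∈ frontier D, ∃ y ∈ ball x r, ball y (ξ * r) ∩ frontier D = ∅ := by
  refine ⟨min (C / 2) (1 / 2), by positivity, (min_le_right _ _).trans_lt (by norm_num), ?_⟩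
  rcases (frontier D).eq_empty_or_nonempty with hempty | hne
  · exact ⟨1, one_pos, by simp [hempty]⟩
  have hz₀F : 0 < infDist z₀ (frontier D) :=
    (isClosed_frontier.notMem_iff_infDist_pos hne).1 fun h => hD.inter_frontier_eq.subset ⟨hz₀, h⟩
  refine ⟨2 * infDist z₀ (frontier D), by positivity, fun r hr hr₀ x hx => ?_⟩
  obtain ⟨γ, -, hγ⟩ := hJohn x hx
  obtain ⟨y, hy, hdisj⟩ := exists_mem_ball_disjoint_ball_of_path γ hγ hr
    (hr₀.le.trans (by gcongr; exact infDist_le_dist_of_mem hx))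
  refine ⟨y, hy, disjoint_iff_inter_eq_empty.1 (hdisj.mono_left (ball_subset_ball ?_))⟩
  gcongr
  exact min_le_left _ _

/-- The boundary of a John domain in the plane is porous. -/
theorem stmt7 (D : Set ℂ) (hD : IsOpen D) (hconn : IsConnected D)
    (z₀ : ℂ) (hz₀ : z₀ ∈ D) (C : ℝ) (hC : 0 < C)
    (hJohn : ∀ z ∈ frontier D, ∃ γ : Path z₀ z,
      Set.range γ \ {z} ⊆ D ∧
      ∀ t : unitInterval, C * dist (γ t) z ≤ infDist (γ t) (frontier D)) :
    ∃ ξ : ℝ, 0 < ξ ∧ ξ < 1 ∧ ∃ r₀ > (0 : ℝ), ∀ r : ℝ, 0 < r → r < r₀ →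
      ∀ x ∈ frontier D, ∃ y ∈ ball x r, ball y (ξ * r) ∩ frontier D = ∅ :=
  stmt7_general D hD z₀ hz₀ C hC hJohn
end
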